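/- Every group homomorphism from $SL_2(\mathbb{Z}/5)$ to $GL_2(\mathbb{Z}_3)$, the group of invertible $2 \times 2$ matrices over the ring of $3$-adic integers, is trivial. -/

import Mathlib

/-!
The transvections of `SL₂(𝔽₅)` have order `5` and generate it. On the other side, `GL₂(ℤ₃)` has
no `5`-torsion: reduction mod `3` sends an element `B` with `B⁵ = 1` into `GL₂(𝔽₃)`, a group of
order `48`, so `B ≡ 1 (mod 3)`; then `C = 1 + B + ⋯ + B⁴ ≡ 5` is invertible, and
`(B - 1) C = B⁵ - 1 = 0` forces `B = 1`.
-/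

open Matrix MatrixGroups

instance PadicInt.isLocalHom_toZMod (p : ℕ) [Fact p.Prime] :
    IsLocalHom (PadicInt.toZMod (p := p)) :=
  ⟨fun a ha => by
    by_contra h
    have hmax : a ∈ IsLocalRing.maximalIdeal ℤ_[p] := h
    rw [← PadicInt.ker_toZMod, RingHom.mem_ker] at hmax
    simp [hmax] at ha⟩

section Torsion

variable {n R S : Type*} [Fintype n] [DecidableEq n] [CommRing R] [CommRing S]

theorem Matrix.eq_one_of_pow_eq_one_of_mapMatrix_eq_one (φ : R →+* S) [IsLocalHom φ]
    {B : Matrix n n R} {m : ℕ} (hm : IsUnit (m : S)) (hB : B ^ m = 1)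
    (hφB : φ.mapMatrix B = 1) : B = 1 := by
  set C := ∑ i ∈ Finset.range m, B ^ i
  have hBC : (B - 1) * C = 0 := by rw [mul_geom_sum, hB, sub_self]
  have hφC : φ.mapMatrix C = (m : S) • (1 : Matrix n n S) := by
    rw [map_sum]
    simp only [map_pow, hφB, one_pow, Finset.sum_const, Finset.card_range, Nat.cast_smul_eq_nsmul]
  have hC : IsUnit C := by
    rw [isUnit_iff_isUnit_det]
    refine IsUnit.of_map φ _ ?_
    rw [RingHom.map_det, hφC, det_smul, det_one, mul_one]
    exact hm.pow _
  simpa [sub_eq_zero] using hC.mul_left_eq_zero.mp hBC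

theorem Matrix.GeneralLinearGroup.eq_one_of_pow_eq_one (φ : R →+* S) [IsLocalHom φ]
    {x : GL n R} {m : ℕ} (hmS : IsUnit (m : S)) (hm : (Nat.card (GL n S)).Coprime m)
    (hx : x ^ m = 1) : x = 1 := by
  have hφx : map φ x = 1 :=
    hm.pow_left_bijective.injective (by simp only [← map_pow, hx, map_one, one_pow])
  exact Units.ext <| eq_one_of_pow_eq_one_of_mapMatrix_eq_one φ hmS
    (by simpa using congrArg Units.val hx) (congrArg Units.val hφx)

end Torsion

theorem Matrix.SpecialLinearGroup.transvection_pow {ι F : Type*} [DecidableEq ι] [Fintype ι]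
    [CommRing F] {i j : ι} (hij : i ≠ j) (b : F) (k : ℕ) :
    transvection hij b ^ k = transvection hij (k * b) := by
  induction k with
  | zero => simp
  | succ k ih => rw [pow_succ, ih, ← transvection_add, Nat.cast_succ, add_one_mul]

theorem Matrix.SL2.monoidHom_eq_one_of_forall_pow_char_eq_one {F G : Type*} [Field F]
    [Group G] (p : ℕ) [CharP F p] (f : SL(2, F) →* G) (hf : ∀ g, g ^ p = 1 → f g = 1) :
    f = 1 :=
  MonoidHom.ext fun A => SL2.transvection_induction (fun A => f A = 1)
    (fun _ _ hij c => hf _ <| by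
      rw [SpecialLinearGroup.transvection_pow, CharP.cast_eq_zero, zero_mul,
        SpecialLinearGroup.transvection_coeff_zero])
    (fun A B hA hB => by simp only [map_mul, hA, hB, one_mul]) A

/-- Every group homomorphism from `SL₂(ℤ/5)` to `GL₂(ℤ₃)`, the group of
invertible `2 × 2` matrices over the `3`-adic integers, is trivial. -/
theorem SL2_ZMod5_hom_to_GL2_Zp3_trivial
    (f : Matrix.SpecialLinearGroup (Fin 2) (ZMod 5) →*
      Matrix.GeneralLinearGroup (Fin 2) ℤ_[3]) : f = 1 := by
  have : Fact (Nat.Prime 5) := ⟨Nat.prime_five⟩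
  have hcard : Nat.card (GL (Fin 2) (ZMod 3)) = 48 := by
    rw [card_GL_field, ZMod.card, Fin.prod_univ_two]; rfl
  exact SL2.monoidHom_eq_one_of_forall_pow_char_eq_one 5 f fun g hg =>
    GeneralLinearGroup.eq_one_of_pow_eq_one (PadicInt.toZMod (p := 3)) (m := 5) (by decide)
      (by rw [hcard]; norm_num) (by rw [← map_pow, hg, map_one])
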